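/- If there exists a derivation of x₁:a₁,…,x_m:a_m ⊢_R u : α in System R (for any λ-term u), then |a₁ … a_m α| = aux(a₁ … a_m α). -/
import Mathlib


/-- Untyped λ-terms with named variables. -/
inductive Lam : Type
  | var : ℕ → Lam
  | app : Lam → Lam → Lam
  | lam : ℕ → Lam → Lam
  deriving DecidableEq

namespace Lam

/-- Substitution of `s` for the variable `x`. -/
def subst : Lam → ℕ → Lam → Lam
  | var y, x, s => if y = x then s else var y
  | app v u, x, s => app (v.subst x s) (u.subst x s)
  | lam y t, x, s => if y = x then lam y t else lam y (t.subst x s)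

/-- One-step β-reduction. -/
inductive Beta : Lam → Lam → Prop
  | beta (x : ℕ) (u t : Lam) : Beta (app (lam x u) t) (u.subst x t)
  | appL {v v' : Lam} (u : Lam) : Beta v v' → Beta (app v u) (app v' u)
  | appR (v : Lam) {u u' : Lam} : Beta u u' → Beta (app v u) (app v u')
  | lam (x : ℕ) {t t' : Lam} : Beta t t' → Beta (lam x t) (lam x t')

/-- One-step head reduction. -/
inductive Head : Lam → Lam → Prop
  | beta (x : ℕ) (u t : Lam) : Head (app (lam x u) t) (u.subst x t)
  | app {v v' : Lam} (u : Lam) :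
      Head v v' → (∀ x w, v ≠ lam x w) → Head (app v u) (app v' u)
  | lam (x : ℕ) {t t' : Lam} : Head t t' → Head (lam x t) (lam x t')

/-- Terms of the shape `(x)t₁…t_p`. -/
inductive HeadApp : Lam → Prop
  | var (x : ℕ) : HeadApp (var x)
  | app {v : Lam} (u : Lam) : HeadApp v → HeadApp (app v u)

/-- Head normal forms: `λx₁…λx_m.(x)t₁…t_p`. -/
inductive HNF : Lam → Prop
  | head {t : Lam} : HeadApp t → HNF t
  | lam (x : ℕ) {t : Lam} : HNF t → HNF (lam x t)

def HeadNormalizable (t : Lam) : Prop :=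
  ∃ t', Relation.ReflTransGen Head t t' ∧ HNF t'

def Normalizable (t : Lam) : Prop :=
  ∃ t', Relation.ReflTransGen Beta t t' ∧ ∀ u, ¬ Beta t' u

/-- The multiset of binding occurrences of variables in a term. -/
def bound : Lam → Multiset ℕ
  | var _ => 0
  | app v u => v.bound + u.bound
  | lam x t => x ::ₘ t.bound

/-- `t` respects the variable convention: every variable is bound at most once. -/
def VC (t : Lam) : Prop := t.bound.Nodup

/-- Free variables. -/
def fv : Lam → Finset ℕ
  | var x => {x}
  | app v u => v.fv ∪ u.fv
  | lam x t => t.fv.erase x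

end Lam

/-! System R: non-idempotent intersection types. -/

/-- Types over the atoms `ℕ`: `D = A ⊎ (M_fin(D) × D)` (finite multisets are
represented as lists; the application rule makes derivability invariant
under permutation). -/
inductive Ty : Type
  | atom : ℕ → Ty
  | arr : List Ty → Ty → Ty

/-- Contexts: finitely supported functions from variables to finite multisets of types. -/
abbrev Ctx := ℕ →₀ Multiset Ty

mutual
  /-- Derivations of System R. -/
  inductive Deriv : Ctx → Lam → Ty → Type
    | ax (x : ℕ) (α : Ty) : Deriv (Finsupp.single x {α}) (.var x) α
    | lam {Γ : Ctx} {v : Lam} {α : Ty} (x : ℕ) (a : List Ty) :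
        Deriv (Γ + Finsupp.single x (↑a : Multiset Ty)) v α → Γ x = 0 →
        Deriv Γ (.lam x v) (.arr a α)
    | app {Γ₀ Γ₁ : Ctx} {v u : Lam} {as : List Ty} {α : Ty} :
        Deriv Γ₀ v (.arr as α) → DerivList Γ₁ u as → Deriv (Γ₀ + Γ₁) (.app v u) α
  /-- Finite families of derivations for the argument of an application. -/
  inductive DerivList : Ctx → Lam → List Ty → Type
    | nil (u : Lam) : DerivList 0 u []
    | cons {Γ Γ' : Ctx} {u : Lam} {α : Ty} {as : List Ty} :
        Deriv Γ u α → DerivList Γ' u as → DerivList (Γ + Γ') u (α :: as)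
end

/-- Derivability in System R : `Γ ⊢_R t : α`. -/
def DerR (Γ : Ctx) (t : Lam) (α : Ty) : Prop := Nonempty (Deriv Γ t α)

mutual
  /-- The size `|α|` of a type. -/
  def tySize : Ty → ℕ
    | .atom _ => 1
    | .arr a α => tyAuxList a + tySize α + 1
  /-- The auxiliary size `aux(α)` of a type. -/
  def tyAux : Ty → ℕ
    | .atom _ => 0
    | .arr a α => tySizeList a + tyAux α + 1
  /-- `|a| = Σᵢ |αᵢ|` for a multiset `a = [α₁,…,α_n]`. -/
  def tySizeList : List Ty → ℕ
    | [] => 0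
    | β :: bs => tySize β + tySizeList bs
  /-- `aux(a) = Σᵢ aux(αᵢ)`. -/
  def tyAuxList : List Ty → ℕ
    | [] => 0
    | β :: bs => tyAux β + tyAuxList bs
end

/-- The type `a₁ … a_m α = (a₁, (a₂, … (a_m, α) …))`. -/
def tyOf (as : List (List Ty)) (α : Ty) : Ty := as.foldr Ty.arr α


namespace Stmt16Aux

noncomputable def d (α : Ty) : ℤ := (tySize α : ℤ) - (tyAux α : ℤ)

noncomputable def S (Γ : Ctx) : ℤ := Γ.sum (fun _ m => (m.map d).sum)

lemma S_add (Γ Γ' : Ctx) : S (Γ + Γ') = S Γ + S Γ' := by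
  unfold S
  apply Finsupp.sum_add_index' <;> intros <;> simp

lemma S_single (x : ℕ) (m : Multiset Ty) : S (Finsupp.single x m) = (m.map d).sum := by
  unfold S
  rw [Finsupp.sum_single_index]; simp

lemma S_zero : S 0 = 0 := by
  unfold S; exact Finsupp.sum_zero_index

lemma list_sum_d (a : List Ty) :
    ((a.map d).sum) = (tySizeList a : ℤ) - (tyAuxList a : ℤ) := by
  induction a with
  | nil => simp [tySizeList, tyAuxList]
  | cons b bs ih => simp [tySizeList, tyAuxList, ih, d]; ring

lemma d_arr (a : List Ty) (α : Ty) : d (.arr a α) = d α - ((a.map d).sum) := by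
  simp [d, tySize, tyAux, list_sum_d]; ring

mutual
theorem derivS : ∀ {Γ : Ctx} {t : Lam} {α : Ty}, Deriv Γ t α → S Γ = d α
  | _, _, _, .ax x α => by rw [S_single]; simp
  | _, _, _, .lam x a D h => by
      have ih := derivS D
      rw [S_add, S_single] at ih
      rw [d_arr]
      simp only [Multiset.map_coe, Multiset.sum_coe] at ih ⊢
      linarith
  | _, _, _, .app D Ds => by
      have ih := derivS D
      have ihl := derivListS Ds
      rw [d_arr] at ih
      rw [S_add, ih, ihl]; ring
theorem derivListS : ∀ {Γ : Ctx} {t : Lam} {as : List Ty},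
    DerivList Γ t as → S Γ = (as.map d).sum
  | _, _, _, .nil u => by rw [S_zero]; simp
  | _, _, _, .cons D Ds => by
      rw [S_add, derivS D, derivListS Ds]; simp
end

lemma S_ziplist : ∀ (xs : List ℕ) (bs : List (Multiset Ty)), xs.length = bs.length →
    S ((List.zipWith (fun x a => Finsupp.single x a) xs bs).sum)
      = (bs.map (fun m => ((m.map d).sum))).sum
  | [], [], _ => by simp [S_zero]
  | x :: xs, b :: bs, h => by
      simp only [List.zipWith_cons_cons, List.sum_cons, List.map_cons]
      rw [S_add, S_single, S_ziplist xs bs (by simpa using h)]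

lemma d_tyOf (as : List (List Ty)) (α : Ty) :
    d (tyOf as α) = d α - (as.map (fun a => ((a.map d).sum))).sum := by
  induction as with
  | nil => simp [tyOf]
  | cons a l ih =>
      simp only [tyOf, List.foldr_cons, List.map_cons, List.sum_cons]
      rw [d_arr]
      simp [tyOf] at ih
      rw [ih]; ring

end Stmt16Aux

/-- if `x₁:a₁,…,x_m:a_m ⊢_R u : α` is derivable for some λ-term `u`,
then `|a₁ … a_m α| = aux(a₁ … a_m α)`. -/
theorem stmt16 (u : Lam) (xs : List ℕ) (hnd : xs.Nodup) (as : List (List Ty)) (α : Ty)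
    (hlen : xs.length = as.length)
    (h : DerR ((List.zipWith (fun x a => Finsupp.single x (↑a : Multiset Ty)) xs as).sum)
          u α) :
    tySize (tyOf as α) = tyAux (tyOf as α) := by
  obtain ⟨D⟩ := h
  have h1 := Stmt16Aux.derivS D
  have hdo : (do let a ← as; pure ((a : List Ty) : Multiset Ty))
      = as.map (fun a => ((a : List Ty) : Multiset Ty)) := by
    clear h1 D hnd hlen
    induction as with
    | nil => rfl
    | cons a l ih => simpa using ih
  rw [hdo] at h1
  rw [Stmt16Aux.S_ziplist xs (as.map (fun a => ((a : List Ty) : Multiset Ty)))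
    (by simpa using hlen)] at h1
  simp only [List.map_map, Function.comp_def, Multiset.map_coe, Multiset.sum_coe] at h1
  have h2 := Stmt16Aux.d_tyOf as α
  rw [← h1] at h2
  simp only [sub_self] at h2
  unfold Stmt16Aux.d at h2
  omega
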